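/- arXiv:2410.07097 — 4 statements merged into one kernel-verified Lean document; each statement's English description precedes it below -/
import Mathlib

section
/- Let U_0 = { y ∈ [0,∞)^{3K} : Σ_{k=1}^K (y^k + y^{K+k}) ≤ 1 and Σ_{k=1}^K (y^k + y^{2K+k}) ≤ 2 }. Any solution y_t of dy/dt = b(y_t) with y_0 ∈ U_0 satisfies y_t ∈ U_0 for all t ≥ 0. -/
/-!
Only nonnegativity needs work. For the stacked vector `y = (s, i, x)` put
`g = ∑ⱼ (yⱼ⁻)²`, whose right derivative is `-2 ∑ⱼ yⱼ⁻ yⱼ'`. On a compact time interval the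
solution is bounded, and there the field satisfies `yⱼ' ≥ -C ∑ₗ yₗ⁻` whenever `yⱼ < 0`: in the
`s`-equation the factor `-sⱼ` is then positive, in the `i`- and `x`-equations the linear decay
term has the right sign, and the infection pressure `η sₖ ∑ₗ xₗ Wₗₖ` can only be negative
through negative parts. Hence `g' ≤ C' g`, and Grönwall with `g 0 = 0` gives `g ≡ 0`.
Once `i, x ≥ 0`, the sums `∑ (s + i)` and `∑ (s + x)` have derivatives `-γ ∑ i ≤ 0` and
`-(η + γ) ∑ x ≤ 0`.
-/

open Filter

/-- The SIR-SBM ODE system: `ds_k/dt = -η s_k Σ_ℓ x_ℓ W_{ℓk}`,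
`di_k/dt = -γ i_k + η s_k Σ_ℓ x_ℓ W_{ℓk}`, `dx_k/dt = -(η+γ) x_k + η s_k Σ_ℓ x_ℓ W_{ℓk}`,
holding on `[0,∞)`. -/
def sirODE {K : ℕ} (W : Matrix (Fin K) (Fin K) ℝ) (η γ : ℝ)
    (s i x : ℝ → Fin K → ℝ) : Prop :=
  ∀ k : Fin K, ∀ t ∈ Set.Ici (0 : ℝ),
    HasDerivWithinAt (fun τ => s τ k)
      (-η * s t k * ∑ l, x t l * W l k) (Set.Ici 0) t ∧
    HasDerivWithinAt (fun τ => i τ k)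
      (-γ * i t k + η * s t k * ∑ l, x t l * W l k) (Set.Ici 0) t ∧
    HasDerivWithinAt (fun τ => x τ k)
      (-(η + γ) * x t k + η * s t k * ∑ l, x t l * W l k) (Set.Ici 0) t

/-- The set `U₀ = { y ∈ [0,∞)^{3K} : Σ_k (s_k + i_k) ≤ 1, Σ_k (s_k + x_k) ≤ 2 }`. -/
def inU0 {K : ℕ} (s i x : Fin K → ℝ) : Prop :=
  (∀ k, 0 ≤ s k) ∧ (∀ k, 0 ≤ i k) ∧ (∀ k, 0 ≤ x k) ∧
    (∑ k, (s k + i k)) ≤ 1 ∧ (∑ k, (s k + x k)) ≤ 2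

open Set Topology

theorem hasDerivAt_negPart_sq (u : ℝ) : HasDerivAt (fun v : ℝ => v⁻ ^ 2) (-2 * u⁻) u := by
  rcases lt_trichotomy u 0 with hu | rfl | hu
  · have : (fun v : ℝ => v ^ 2) =ᶠ[𝓝 u] fun v => v⁻ ^ 2 := by
      filter_upwards [Iio_mem_nhds hu] with v hv
      rw [negPart_of_nonpos hv.le, neg_sq]
    simpa [negPart_of_nonpos hu.le] using (hasDerivAt_pow 2 u).congr_of_eventuallyEq this.symm
  · rw [hasDerivAt_iff_isLittleO]
    simp only [negPart_zero, mul_zero, smul_zero, sub_zero, ne_eq, OfNat.ofNat_ne_zero,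
      not_false_eq_true, zero_pow]
    refine Asymptotics.IsBigO.trans_isLittleO (g := fun v : ℝ => v ^ 2) ?_
      (by simpa using Asymptotics.isLittleO_pow_id (n := 2) one_lt_two)
    refine Asymptotics.IsBigO.of_bound 1 (Eventually.of_forall fun v => ?_)
    rcases le_total v 0 with hv | hv
    · simp [negPart_of_nonpos hv]
    · simp [negPart_of_nonneg hv, sq_nonneg]
  · have : (fun _ : ℝ => (0 : ℝ)) =ᶠ[𝓝 u] fun v => v⁻ ^ 2 := by
      filter_upwards [Ioi_mem_nhds hu] with v hv
      rw [negPart_of_nonneg hv.le]; simp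
    simpa [negPart_of_nonneg hu.le] using
      (hasDerivAt_const u (0 : ℝ)).congr_of_eventuallyEq this.symm

theorem neg_mul_add_negPart_le_mul {a b R : ℝ} (hR : 0 ≤ R) (ha : a ≤ R) (hb : b ≤ R) :
    -(R * (a⁻ + b⁻)) ≤ a * b := by
  rcases le_total a 0 with ha0 | ha0 <;> rcases le_total b 0 with hb0 | hb0 <;>
    simp only [negPart_of_nonpos, negPart_of_nonneg, *] <;> nlinarith

theorem neg_le_mul_sum_mul_of_le {ι : Type*} [Fintype ι] {W : ι → ℝ} (hW : ∀ l, 0 ≤ W l)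
    {M R u : ℝ} (hWM : ∀ l, W l ≤ M) (hR : 0 ≤ R) (hu : u ≤ R) {x : ι → ℝ}
    (hx : ∀ l, x l ≤ R) :
    -(M * R * (Fintype.card ι * u⁻ + ∑ l, (x l)⁻)) ≤ u * ∑ l, x l * W l := by
  have hterm : ∀ l, -(R * (u⁻ + (x l)⁻)) * M ≤ u * (x l * W l) := fun l =>
    calc -(R * (u⁻ + (x l)⁻)) * M ≤ -(R * (u⁻ + (x l)⁻)) * W l :=
          mul_le_mul_of_nonpos_left (hWM l)
            (by nlinarith [negPart_nonneg u, negPart_nonneg (x l)])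
      _ ≤ u * x l * W l :=
          mul_le_mul_of_nonneg_right (neg_mul_add_negPart_le_mul hR hu (hx l)) (hW l)
      _ = u * (x l * W l) := mul_assoc _ _ _
  calc -(M * R * (Fintype.card ι * u⁻ + ∑ l, (x l)⁻)) = -(M * R) * ∑ l, (u⁻ + (x l)⁻) := by
        rw [Finset.sum_add_distrib, Finset.sum_const, Finset.card_univ, nsmul_eq_mul]; ring
    _ = ∑ l, -(R * (u⁻ + (x l)⁻)) * M := by
        rw [Finset.mul_sum]; exact Finset.sum_congr rfl fun l _ => by ring
    _ ≤ u * ∑ l, x l * W l := by rw [Finset.mul_sum]; exact Finset.sum_le_sum fun l _ => hterm l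

theorem nonneg_of_deriv_ge_neg_mul_sum_negPart {ι : Type*} [Fintype ι] {f f' : ℝ → ι → ℝ}
    {a b C : ℝ} (hC : 0 ≤ C) (hcont : ∀ j, ContinuousOn (fun t => f t j) (Icc a b))
    (hderiv : ∀ j, ∀ t ∈ Ico a b, HasDerivWithinAt (fun t => f t j) (f' t j) (Ici t) t)
    (hquasi : ∀ t ∈ Ico a b, ∀ j, f t j < 0 → -(C * ∑ l, (f t l)⁻) ≤ f' t j)
    (ha : ∀ j, 0 ≤ f a j) : ∀ t ∈ Icc a b, ∀ j, 0 ≤ f t j := by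
  set g : ℝ → ℝ := fun t => ∑ j, (f t j)⁻ ^ 2
  have hg_nonneg : ∀ t, 0 ≤ g t := fun t => Finset.sum_nonneg fun j _ => sq_nonneg _
  have hg_deriv : ∀ t ∈ Ico a b,
      HasDerivWithinAt g (∑ j, -2 * (f t j)⁻ * f' t j) (Ici t) t := fun t ht =>
    HasDerivWithinAt.fun_sum fun j _ => by
      simpa [Function.comp_def, mul_assoc] using
        (hasDerivAt_negPart_sq (f t j)).comp_hasDerivWithinAt t (hderiv j t ht)
  -- Each summand is at most `2 C (f t j)⁻ N` with `N = ∑ l, (f t l)⁻`, and `N ^ 2 ≤ card ι * g`.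
  have hg_bound : ∀ t ∈ Ico a b,
      ∑ j, -2 * (f t j)⁻ * f' t j ≤ 2 * C * Fintype.card ι * g t := by
    intro t ht
    set N := ∑ l, (f t l)⁻
    have hterm : ∀ j, -2 * (f t j)⁻ * f' t j ≤ 2 * C * ((f t j)⁻ * N) := by
      intro j
      rcases lt_or_ge (f t j) 0 with hneg | hnonneg
      · nlinarith [hquasi t ht j hneg, negPart_nonneg (f t j)]
      · simp [negPart_of_nonneg hnonneg]
    calc ∑ j, -2 * (f t j)⁻ * f' t j ≤ ∑ j, 2 * C * ((f t j)⁻ * N) :=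
          Finset.sum_le_sum fun j _ => hterm j
      _ = 2 * C * N ^ 2 := by rw [← Finset.mul_sum, ← Finset.sum_mul, sq]
      _ ≤ 2 * C * Fintype.card ι * g t := by
          rw [mul_assoc (2 * C)]
          gcongr
          simpa using sq_sum_le_card_mul_sum_sq (s := Finset.univ) (f := fun l => (f t l)⁻)
  have hg_zero : ∀ t ∈ Icc a b, g t ≤ 0 := by
    intro t ht
    have hneg : ∀ j, ContinuousOn (fun t => (f t j)⁻) (Icc a b) := fun j =>
      ContinuousOn.sup (f := fun t => -f t j) (hcont j).neg continuousOn_const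
    simpa [gronwallBound_ε0_δ0] using le_gronwallBound_of_liminf_deriv_right_le (δ := 0) (ε := 0)
      (continuousOn_finsetSum _ fun j _ => (hneg j).pow 2)
      (fun t ht r hr => (hg_deriv t ht).liminf_right_slope_le hr)
      (by simp [negPart_of_nonneg (ha _)]) (fun t ht => by simpa using hg_bound t ht) t ht
  intro t ht j
  have := (Finset.sum_eq_zero_iff_of_nonneg fun j _ => sq_nonneg _).1
    (le_antisymm (hg_zero t ht) (hg_nonneg t)) j (Finset.mem_univ j)
  exact negPart_eq_zero.1 (pow_eq_zero_iff two_ne_zero |>.1 this)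

theorem le_of_hasDerivWithinAt_Ici_nonpos {f f' : ℝ → ℝ} {a : ℝ}
    (hf : ∀ t ∈ Ici a, HasDerivWithinAt f (f' t) (Ici a) t) (hf' : ∀ t ∈ Ici a, f' t ≤ 0)
    {t : ℝ} (ht : a ≤ t) : f t ≤ f a :=
  antitoneOn_of_hasDerivWithinAt_nonpos (convex_Ici a)
    (fun t ht => (hf t ht).continuousWithinAt)
    (fun t ht => by
      rw [interior_Ici] at ht ⊢
      exact (hf t (Ioi_subset_Ici_self ht)).mono Ioi_subset_Ici_self)
    (fun t ht => hf' t (interior_subset ht)) self_mem_Ici ht ht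

section SIR

variable {K : ℕ}

def sirVec (s i x : Fin K → ℝ) : Fin K ⊕ Fin K ⊕ Fin K → ℝ := Sum.elim s (Sum.elim i x)

def sirField (W : Matrix (Fin K) (Fin K) ℝ) (η γ : ℝ) (s i x : Fin K → ℝ) :
    Fin K ⊕ Fin K ⊕ Fin K → ℝ :=
  sirVec (fun k => -η * s k * ∑ l, x l * W l k)
    (fun k => -γ * i k + η * s k * ∑ l, x l * W l k)
    (fun k => -(η + γ) * x k + η * s k * ∑ l, x l * W l k)

theorem sum_negPart_sirVec (s i x : Fin K → ℝ) :
    ∑ q, (sirVec s i x q)⁻ = ∑ k, (s k)⁻ + (∑ k, (i k)⁻ + ∑ k, (x k)⁻) := by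
  simp only [sirVec, Fintype.sum_sum_type, Sum.elim_inl, Sum.elim_inr]

theorem sirField_ge_of_sirVec_neg {W : Matrix (Fin K) (Fin K) ℝ} (hW : ∀ k l, 0 ≤ W k l)
    {M : ℝ} (hWM : ∀ l k, W l k ≤ M) (hM : 0 ≤ M) {η γ R : ℝ} (hη : 0 ≤ η) (hγ : 0 ≤ γ)
    (hR : 0 ≤ R) {s i x : Fin K → ℝ} (hs : ∀ k, |s k| ≤ R) (hx : ∀ k, x k ≤ R)
    (p : Fin K ⊕ Fin K ⊕ Fin K) (hneg : sirVec s i x p < 0) :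
    -(η * M * R * (K + 1) * ∑ q, (sirVec s i x q)⁻) ≤ sirField W η γ s i x p := by
  set N := ∑ q, (sirVec s i x q)⁻
  have hN := sum_negPart_sirVec s i x
  have hs_sum := Finset.sum_nonneg fun k (_ : k ∈ Finset.univ) => negPart_nonneg (s k)
  have hi_sum := Finset.sum_nonneg fun k (_ : k ∈ Finset.univ) => negPart_nonneg (i k)
  have hx_sum := Finset.sum_nonneg fun k (_ : k ∈ Finset.univ) => negPart_nonneg (x k)
  have hsN : ∀ k, (s k)⁻ ≤ N := fun k => by
    linarith [Finset.single_le_sum (fun k _ => negPart_nonneg (s k)) (Finset.mem_univ k)]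
  have hpressure : ∀ k u, |u| ≤ R → u⁻ ≤ N →
      -(η * M * R * (K + 1) * N) ≤ η * (u * ∑ l, x l * W l k) := by
    intro k u hu huN
    have hP := neg_le_mul_sum_mul_of_le (fun l => hW l k) (fun l => hWM l k) hR
      ((le_abs_self u).trans hu) hx
    rw [Fintype.card_fin] at hP
    have hKN : (K : ℝ) * u⁻ ≤ K * N := mul_le_mul_of_nonneg_left huN K.cast_nonneg
    have hMR : M * R * (K * u⁻ + ∑ l, (x l)⁻) ≤ M * R * (K + 1) * N := by
      rw [mul_assoc (M * R)]
      exact mul_le_mul_of_nonneg_left (by linarith) (mul_nonneg hM hR)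
    nlinarith
  rcases p with k | k | k
  · have hsk : s k < 0 := hneg
    have := hpressure k (-s k) (by rw [abs_neg]; exact hs k)
      (by rw [negPart_of_nonneg (neg_nonneg.2 hsk.le)]; exact (hsN k).trans' (negPart_nonneg _))
    show _ ≤ -η * s k * ∑ l, x l * W l k
    linarith
  · have hik : i k < 0 := hneg
    have := hpressure k (s k) (hs k) (hsN k)
    show _ ≤ -γ * i k + η * s k * ∑ l, x l * W l k
    nlinarith
  · have hxk : x k < 0 := hneg
    have := hpressure k (s k) (hs k) (hsN k)
    show _ ≤ -(η + γ) * x k + η * s k * ∑ l, x l * W l k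
    nlinarith

variable {W : Matrix (Fin K) (Fin K) ℝ} {η γ : ℝ} {s i x : ℝ → Fin K → ℝ}

theorem sirODE.hasDerivWithinAt_sirVec (hODE : sirODE W η γ s i x) (p : Fin K ⊕ Fin K ⊕ Fin K)
    {t : ℝ} (ht : t ∈ Ici 0) :
    HasDerivWithinAt (fun τ => sirVec (s τ) (i τ) (x τ) p) (sirField W η γ (s t) (i t) (x t) p)
      (Ici 0) t := by
  rcases p with k | k | k
  exacts [(hODE k t ht).1, (hODE k t ht).2.1, (hODE k t ht).2.2]

theorem sirODE.nonneg (hODE : sirODE W η γ s i x) (hW : ∀ k l, 0 ≤ W k l)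
    (hη : 0 ≤ η) (hγ : 0 ≤ γ) (hs0 : ∀ k, 0 ≤ s 0 k) (hi0 : ∀ k, 0 ≤ i 0 k)
    (hx0 : ∀ k, 0 ≤ x 0 k) {T : ℝ} (hT : 0 ≤ T) :
    (∀ k, 0 ≤ s T k) ∧ (∀ k, 0 ≤ i T k) ∧ ∀ k, 0 ≤ x T k := by
  set y : ℝ → Fin K ⊕ Fin K ⊕ Fin K → ℝ := fun t => sirVec (s t) (i t) (x t)
  have hcont : ContinuousOn y (Icc 0 T) := continuousOn_pi.2 fun p t ht =>
    (hODE.hasDerivWithinAt_sirVec p ht.1).continuousWithinAt.mono Icc_subset_Ici_self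
  obtain ⟨R, hR⟩ := isCompact_Icc.exists_bound_of_continuousOn hcont
  have hR0 : 0 ≤ R := (norm_nonneg _).trans (hR 0 ⟨le_rfl, hT⟩)
  have hyR : ∀ t ∈ Icc 0 T, ∀ p, |y t p| ≤ R := fun t ht p =>
    (norm_le_pi_norm (y t) p).trans (hR t ht)
  set M : ℝ := ∑ p : Fin K × Fin K, W p.1 p.2
  have hWM : ∀ l k, W l k ≤ M := fun l k =>
    Finset.single_le_sum (f := fun p : Fin K × Fin K => W p.1 p.2) (fun p _ => hW _ _)
      (Finset.mem_univ (l, k))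
  have hM : 0 ≤ M := Finset.sum_nonneg fun p _ => hW _ _
  have hy := nonneg_of_deriv_ge_neg_mul_sum_negPart (by positivity)
    (fun p => continuousOn_pi.1 hcont p)
    (fun p t ht => (hODE.hasDerivWithinAt_sirVec p ht.1).mono (Ici_subset_Ici.2 ht.1))
    (fun t ht => sirField_ge_of_sirVec_neg hW hWM hM hη hγ hR0
      (fun k => hyR t (Ico_subset_Icc_self ht) (.inl k))
      (fun k => (le_abs_self _).trans (hyR t (Ico_subset_Icc_self ht) (.inr (.inr k)))))
    (by rintro (k | k | k); exacts [hs0 k, hi0 k, hx0 k]) T ⟨hT, le_rfl⟩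
  exact ⟨fun k => hy (.inl k), fun k => hy (.inr (.inl k)), fun k => hy (.inr (.inr k))⟩

theorem sirODE.sum_s_add_i_le (hODE : sirODE W η γ s i x) (hγ : 0 ≤ γ)
    (hi : ∀ t ∈ Ici (0 : ℝ), ∀ k, 0 ≤ i t k) {t : ℝ} (ht : 0 ≤ t) :
    ∑ k, (s t k + i t k) ≤ ∑ k, (s 0 k + i 0 k) :=
  le_of_hasDerivWithinAt_Ici_nonpos (f' := fun τ => ∑ k, -γ * i τ k)
    (fun τ hτ => HasDerivWithinAt.fun_sum fun k _ => by
      convert (hODE k τ hτ).1.add (hODE k τ hτ).2.1 using 1; ring)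
    (fun τ hτ => Finset.sum_nonpos fun k _ => by nlinarith [hi τ hτ k]) ht

theorem sirODE.sum_s_add_x_le (hODE : sirODE W η γ s i x) (hη : 0 ≤ η) (hγ : 0 ≤ γ)
    (hx : ∀ t ∈ Ici (0 : ℝ), ∀ k, 0 ≤ x t k) {t : ℝ} (ht : 0 ≤ t) :
    ∑ k, (s t k + x t k) ≤ ∑ k, (s 0 k + x 0 k) :=
  le_of_hasDerivWithinAt_Ici_nonpos (f' := fun τ => ∑ k, -(η + γ) * x τ k)
    (fun τ hτ => HasDerivWithinAt.fun_sum fun k _ => by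
      convert (hODE k τ hτ).1.add (hODE k τ hτ).2.2 using 1; ring)
    (fun τ hτ => Finset.sum_nonpos fun k _ => by nlinarith [hx τ hτ k]) ht

end SIR

theorem stmt4_general {K : ℕ} (W : Matrix (Fin K) (Fin K) ℝ) (hW : ∀ k l, 0 ≤ W k l)
    (η γ : ℝ) (hη : 0 < η) (hγ : 0 < γ)
    (s i x : ℝ → Fin K → ℝ) (hODE : sirODE W η γ s i x)
    (h0 : inU0 (s 0) (i 0) (x 0)) :
    ∀ t ∈ Set.Ici (0 : ℝ), inU0 (s t) (i t) (x t) := by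
  obtain ⟨hs0, hi0, hx0, hsi0, hsx0⟩ := h0
  have hnonneg : ∀ t ∈ Ici (0 : ℝ), (∀ k, 0 ≤ s t k) ∧ (∀ k, 0 ≤ i t k) ∧ ∀ k, 0 ≤ x t k :=
    fun t ht => hODE.nonneg hW hη.le hγ.le hs0 hi0 hx0 ht
  intro t ht
  obtain ⟨hs, hi, hx⟩ := hnonneg t ht
  exact ⟨hs, hi, hx,
    (hODE.sum_s_add_i_le hγ.le (fun τ hτ => (hnonneg τ hτ).2.1) ht).trans hsi0,
    (hODE.sum_s_add_x_le hη.le hγ.le (fun τ hτ => (hnonneg τ hτ).2.2) ht).trans hsx0⟩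

/-- Any solution of the SIR-SBM system starting in `U₀` stays in `U₀` for all `t ≥ 0`. -/
theorem stmt4 {K : ℕ} (W : Matrix (Fin K) (Fin K) ℝ) (hW : ∀ k l, 0 ≤ W k l)
    (hWsymm : W.IsSymm) (η γ : ℝ) (hη : 0 < η) (hγ : 0 < γ)
    (s i x : ℝ → Fin K → ℝ) (hODE : sirODE W η γ s i x)
    (h0 : inU0 (s 0) (i 0) (x 0)) :
    ∀ t ∈ Set.Ici (0 : ℝ), inU0 (s t) (i t) (x t) :=
  stmt4_general W hW η γ hη hγ s i x hODE h0
end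

section
/- Under the same SIR-SBM ODE system with initial data in U_0: for each k, lim_{t→∞} x_k(t) = 0 and lim_{t→∞} i_k(t) = 0. -/
open Filter

/-!
Each of `s`, `i`, `x` solves, on every interval `[0, T]`, a linear system whose off-diagonal
coefficients are nonnegative and bounded, so the sum of the negative parts of its coordinates
satisfies a Grönwall inequality `f' ≤ C f` with `f 0 = 0`; hence all compartments stay nonnegative.
Then `s_k` is nonincreasing and converges, while `x_k + s_k` is nonincreasing with derivative
`-(η + γ) x_k`. So `x_k` converges too, and a positive limit would make `x_k + s_k` decrease at a
linear rate, contradicting its nonnegativity. The same argument with `i_k + s_k`, whose derivative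
is `-γ i_k`, applies to `i_k`.
-/

open Set Topology

def UpperRightDiniLE (f : ℝ → ℝ) (t B : ℝ) : Prop :=
  ∀ r > B, ∀ᶠ z in 𝓝[>] t, slope f t z < r

namespace UpperRightDiniLE

variable {f g : ℝ → ℝ} {t B C : ℝ}

theorem add (hf : UpperRightDiniLE f t B) (hg : UpperRightDiniLE g t C) :
    UpperRightDiniLE (f + g) t (B + C) := by
  intro r hr
  filter_upwards [hf (B + (r - B - C) / 2) (by linarith), hg (C + (r - B - C) / 2) (by linarith)]
    with z hfz hgz
  have hslope : slope (f + g) t z = slope f t z + slope g t z := by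
    simp only [slope_def_field, Pi.add_apply]; ring
  linarith

theorem zero : UpperRightDiniLE 0 t 0 := fun r hr =>
  Eventually.of_forall fun z => by simpa [slope_def_field] using hr

theorem finsetSum {ι : Type*} (s : Finset ι) {f : ι → ℝ → ℝ} {B : ι → ℝ}
    (h : ∀ k ∈ s, UpperRightDiniLE (f k) t (B k)) :
    UpperRightDiniLE (∑ k ∈ s, f k) t (∑ k ∈ s, B k) := by
  classical
  induction s using Finset.induction_on with
  | empty => simpa using zero
  | insert k s hk ih =>
    rw [Finset.sum_insert hk, Finset.sum_insert hk]
    exact (h k (s.mem_insert_self k)).add (ih fun l hl => h l (Finset.mem_insert_of_mem hl))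

end UpperRightDiniLE

theorem upperRightDiniLE_negPart {g : ℝ → ℝ} {g' t B : ℝ} (hg : HasDerivWithinAt g g' (Ici t) t)
    (hB : 0 ≤ B) (hg' : g t ≤ 0 → -g' ≤ B) : UpperRightDiniLE (fun τ => (g τ)⁻) t B := by
  intro r hr
  rcases lt_or_ge 0 (g t) with hpos | hnonpos
  · have hgz : ∀ᶠ z in 𝓝[>] t, 0 < g z :=
      (hg.continuousWithinAt.mono Ioi_subset_Ici_self).eventually (lt_mem_nhds hpos)
    filter_upwards [hgz] with z hz
    rw [slope_def_field, negPart_eq_zero.2 hz.le, negPart_eq_zero.2 hpos.le, sub_self, zero_div]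
    linarith
  · have hneg : ∀ᶠ z in 𝓝[>] t, slope (-g) t z < r :=
      hg.neg.Ioi_of_Ici.limsup_slope_le' (lt_irrefl t) (by linarith [hg' hnonpos])
    filter_upwards [hneg, self_mem_nhdsWithin] with z hz (hzt : t < z)
    rw [slope_def_field] at hz ⊢
    rw [div_lt_iff₀ (sub_pos.2 hzt)] at hz ⊢
    rw [negPart_eq_neg.2 hnonpos]
    rcases le_total 0 (g z) with hgz | hgz
    · rw [negPart_eq_zero.2 hgz]; nlinarith
    · rw [negPart_eq_neg.2 hgz]; simpa [sub_eq_add_neg, add_comm] using hz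

theorem nonneg_of_neg_deriv_le_mul_sum_negPart {ι : Type*} [Fintype ι] {x x' : ℝ → ι → ℝ}
    {a T C : ℝ} (hx : ∀ k, ∀ t ∈ Ici a, HasDerivWithinAt (fun τ => x τ k) (x' t k) (Ici a) t)
    (hC : 0 ≤ C) (hbound : ∀ t ∈ Ico a T, ∀ k, x t k ≤ 0 → -x' t k ≤ C * ∑ l, (x t l)⁻)
    (ha : ∀ k, 0 ≤ x a k) : ∀ t ∈ Icc a T, ∀ k, 0 ≤ x t k := by
  set f : ℝ → ℝ := fun t => ∑ l, (x t l)⁻ with hf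
  have hf_cont : ContinuousOn f (Icc a T) := continuousOn_finsetSum _ fun l _ =>
    (ContinuousOn.mono (fun t ht => (hx l t ht).continuousWithinAt) Icc_subset_Ici_self).neg.sup
      continuousOn_const
  have hf_dini : ∀ t ∈ Ico a T, UpperRightDiniLE f t (Fintype.card ι * C * f t) := by
    intro t ht
    have := UpperRightDiniLE.finsetSum Finset.univ fun k _ =>
      upperRightDiniLE_negPart ((hx k t ht.1).mono (Ici_subset_Ici.2 ht.1))
        (mul_nonneg hC (Finset.sum_nonneg fun l _ => negPart_nonneg _)) (hbound t ht k)
    simpa [Finset.sum_fn, mul_assoc] using this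
  have hf_zero : ∀ t ∈ Icc a T, f t ≤ 0 := fun t ht => by
    simpa only [gronwallBound_ε0_δ0] using
      le_gronwallBound_of_liminf_deriv_right_le (δ := 0) (ε := 0) hf_cont
      (fun t ht r hr => (hf_dini t ht r hr).frequently)
      (by simp [hf, negPart_eq_zero.2 (ha _)]) (fun t _ => (add_zero _).ge) t ht
  intro t ht k
  have hk : (x t k)⁻ = 0 := (Finset.sum_eq_zero_iff_of_nonneg fun l _ => negPart_nonneg _).1
    ((hf_zero t ht).antisymm (Finset.sum_nonneg fun l _ => negPart_nonneg _)) k (Finset.mem_univ k)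
  exact negPart_eq_zero.1 hk

theorem antitoneOn_Ici_of_hasDerivWithinAt_nonpos {f f' : ℝ → ℝ} {a : ℝ}
    (hf : ∀ t ∈ Ici a, HasDerivWithinAt f (f' t) (Ici a) t) (hf' : ∀ t ∈ Ici a, f' t ≤ 0) :
    AntitoneOn f (Ici a) :=
  antitoneOn_of_hasDerivWithinAt_nonpos (convex_Ici a) (fun t ht => (hf t ht).continuousWithinAt)
    (fun t ht => by
      rw [interior_Ici] at ht ⊢
      exact (hf t (mem_Ici_of_Ioi ht)).mono Ioi_subset_Ici_self)
    (fun t ht => hf' t (interior_subset ht))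

theorem AntitoneOn.exists_tendsto_atTop_of_bddBelow {f : ℝ → ℝ} {a : ℝ}
    (hf : AntitoneOn f (Ici a)) (hbdd : BddBelow (f '' Ici a)) : ∃ L, Tendsto f atTop (𝓝 L) := by
  set g : ℝ → ℝ := fun t => f (max t a)
  have hg : Antitone g := fun t u htu =>
    hf (le_max_right t a) (le_max_right u a) (max_le_max htu le_rfl)
  have hg_bdd : BddBelow (range g) :=
    hbdd.mono (range_subset_iff.2 fun t => mem_image_of_mem f (le_max_right t a))
  have hfg : g =ᶠ[atTop] f := by
    filter_upwards [eventually_ge_atTop a] with t ht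
    simp only [g, max_eq_left ht]
  exact ⟨_, (tendsto_atTop_ciInf hg hg_bdd).congr' hfg⟩

theorem nonpos_of_hasDerivWithinAt_le_neg_of_tendsto {w w' g : ℝ → ℝ} {a X : ℝ}
    (hw : ∀ t ∈ Ici a, HasDerivWithinAt w (w' t) (Ici a) t) (hw' : ∀ t ∈ Ici a, w' t ≤ -g t)
    (hg : Tendsto g atTop (𝓝 X)) (hbdd : BddBelow (w '' Ici a)) : X ≤ 0 := by
  by_contra! hX
  obtain ⟨t₀, ht₀⟩ := eventually_atTop.1
    ((hg.eventually (lt_mem_nhds (half_lt_self hX))).and (eventually_ge_atTop a))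
  have hanti : AntitoneOn (fun t => w t + X / 2 * t) (Ici t₀) := by
    refine antitoneOn_Ici_of_hasDerivWithinAt_nonpos (f' := fun t => w' t + X / 2)
      (fun t ht => ?_) (fun t ht => by linarith [hw' t (ht₀ t ht).2, (ht₀ t ht).1])
    have hta : t ∈ Ici a := (ht₀ t ht).2
    exact ((hw t hta).mono (Ici_subset_Ici.2 (ht₀ t₀ le_rfl).2)).add
      (((hasDerivAt_id t).const_mul (X / 2)).hasDerivWithinAt.congr_deriv (mul_one _))
  have hline : Tendsto (fun t => w t₀ + X / 2 * t₀ - X / 2 * t) atTop atBot :=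
    tendsto_atBot_add_const_left _ _
      (tendsto_neg_atTop_atBot.comp (tendsto_id.const_mul_atTop (half_pos hX)))
  have hw_bot : Tendsto w atTop atBot := tendsto_atBot_mono' _ (by
    filter_upwards [eventually_ge_atTop t₀] with t ht
    linarith [hanti self_mem_Ici ht ht]) hline
  obtain ⟨m, hm⟩ := hbdd
  obtain ⟨t, hwt, hta⟩ := ((hw_bot.eventually_lt_atBot m).and (eventually_ge_atTop a)).exists
  exact absurd (hm (mem_image_of_mem w hta)) (not_le.2 hwt)

theorem tendsto_zero_of_hasDerivWithinAt_add {u v : ℝ → ℝ} {a c S : ℝ} (hc : 0 < c)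
    (huv : ∀ t ∈ Ici a, HasDerivWithinAt (fun τ => u τ + v τ) (-c * u t) (Ici a) t)
    (hu : ∀ t ∈ Ici a, 0 ≤ u t) (hv : ∀ t ∈ Ici a, 0 ≤ v t) (hvS : Tendsto v atTop (𝓝 S)) :
    Tendsto u atTop (𝓝 0) := by
  have hbdd : BddBelow ((fun τ => u τ + v τ) '' Ici a) :=
    ⟨0, forall_mem_image.2 fun t ht => add_nonneg (hu t ht) (hv t ht)⟩
  obtain ⟨L, hL⟩ := (antitoneOn_Ici_of_hasDerivWithinAt_nonpos huv fun t ht =>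
    by nlinarith [hu t ht]).exists_tendsto_atTop_of_bddBelow hbdd
  have huX : Tendsto u atTop (𝓝 (L - S)) := by simpa using hL.sub hvS
  have hX_nonneg : 0 ≤ L - S := ge_of_tendsto huX ((eventually_ge_atTop a).mono hu)
  have hX_nonpos : c * (L - S) ≤ 0 := nonpos_of_hasDerivWithinAt_le_neg_of_tendsto huv
    (fun t _ => (neg_mul c (u t)).le) (huX.const_mul c) hbdd
  have hX : L - S = 0 := le_antisymm (nonpos_of_mul_nonpos_right hX_nonpos hc) hX_nonneg
  rwa [hX] at huX

theorem exists_abs_le_of_continuousOn_Icc {ι : Type*} [Fintype ι] {y : ℝ → ι → ℝ} {a T : ℝ}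
    (hy : ContinuousOn y (Icc a T)) : ∃ M, 0 ≤ M ∧ ∀ t ∈ Icc a T, ∀ k, |y t k| ≤ M := by
  obtain ⟨M, hM⟩ := isCompact_Icc.exists_bound_of_continuousOn hy
  exact ⟨max M 0, le_max_right M 0, fun t ht k =>
    ((norm_le_pi_norm (y t) k).trans (hM t ht)).trans (le_max_left M 0)⟩

theorem incidence_nonneg {K : ℕ} {W : Matrix (Fin K) (Fin K) ℝ} (hW : ∀ k l, 0 ≤ W k l) {η : ℝ}
    (hη : 0 ≤ η) {s x : Fin K → ℝ} {k : Fin K} (hs : 0 ≤ s k) (hx : ∀ l, 0 ≤ x l) :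
    0 ≤ η * s k * ∑ l, x l * W l k :=
  mul_nonneg (mul_nonneg hη hs) (Finset.sum_nonneg fun l _ => mul_nonneg (hx l) (hW l k))

namespace sirODE

variable {K : ℕ} {W : Matrix (Fin K) (Fin K) ℝ} {η γ : ℝ} {s i x : ℝ → Fin K → ℝ}

theorem continuousOn_s (h : sirODE W η γ s i x) : ContinuousOn s (Ici 0) :=
  continuousOn_pi.2 fun k t ht => (h k t ht).1.continuousWithinAt

theorem continuousOn_x (h : sirODE W η γ s i x) : ContinuousOn x (Ici 0) :=
  continuousOn_pi.2 fun k t ht => (h k t ht).2.2.continuousWithinAt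

theorem hasDerivWithinAt_x_add_s (h : sirODE W η γ s i x) (k : Fin K) {t : ℝ} (ht : t ∈ Ici 0) :
    HasDerivWithinAt (fun τ => x τ k + s τ k) (-(η + γ) * x t k) (Ici 0) t :=
  ((h k t ht).2.2.add (h k t ht).1).congr_deriv (by ring)

theorem hasDerivWithinAt_i_add_s (h : sirODE W η γ s i x) (k : Fin K) {t : ℝ} (ht : t ∈ Ici 0) :
    HasDerivWithinAt (fun τ => i τ k + s τ k) (-γ * i t k) (Ici 0) t :=
  ((h k t ht).2.1.add (h k t ht).1).congr_deriv (by ring)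

theorem s_nonneg (h : sirODE W η γ s i x) (hη : 0 ≤ η) (hs0 : ∀ k, 0 ≤ s 0 k) :
    ∀ t ∈ Ici 0, ∀ k, 0 ≤ s t k := by
  intro T hT
  obtain ⟨N, hN0, hN⟩ := exists_abs_le_of_continuousOn_Icc (y := fun t k => ∑ l, x t l * W l k)
    (a := 0) (T := T) <| continuousOn_pi.2 fun k => continuousOn_finsetSum _ fun l _ =>
      (continuousOn_pi.1 h.continuousOn_x l).mul continuousOn_const
        |>.mono Icc_subset_Ici_self
  refine nonneg_of_neg_deriv_le_mul_sum_negPart (fun k t ht => (h k t ht).1) (C := η * N)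
    (mul_nonneg hη hN0) (fun t ht k hk => ?_) hs0 T ⟨hT, le_rfl⟩
  calc -(-η * s t k * ∑ l, x t l * W l k) = η * (s t k)⁻ * -∑ l, x t l * W l k := by
        rw [negPart_eq_neg.2 hk]; ring
    _ ≤ η * (s t k)⁻ * N :=
        mul_le_mul_of_nonneg_left ((neg_le_abs _).trans (hN t (Ico_subset_Icc_self ht) k))
          (mul_nonneg hη (negPart_nonneg _))
    _ ≤ η * N * ∑ l, (s t l)⁻ := by
        rw [mul_right_comm]
        exact mul_le_mul_of_nonneg_left
          (Finset.single_le_sum (fun l _ => negPart_nonneg (s t l)) (Finset.mem_univ k))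
          (mul_nonneg hη hN0)

theorem x_nonneg (h : sirODE W η γ s i x) (hW : ∀ k l, 0 ≤ W k l) (hη : 0 ≤ η) (hγ : 0 ≤ γ)
    (hs : ∀ t ∈ Ici 0, ∀ k, 0 ≤ s t k) (hx0 : ∀ k, 0 ≤ x 0 k) :
    ∀ t ∈ Ici 0, ∀ k, 0 ≤ x t k := by
  intro T hT
  obtain ⟨M, hM0, hM⟩ := exists_abs_le_of_continuousOn_Icc
    (y := fun t (p : Fin K × Fin K) => η * s t p.2 * W p.1 p.2) (a := 0) (T := T) <|
      continuousOn_pi.2 fun p =>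
        (continuousOn_const.mul (continuousOn_pi.1 h.continuousOn_s p.2)).mul continuousOn_const
          |>.mono Icc_subset_Ici_self
  refine nonneg_of_neg_deriv_le_mul_sum_negPart (fun k t ht => (h k t ht).2.2) hM0
    (fun t ht k hk => ?_) hx0 T ⟨hT, le_rfl⟩
  have hcoef : ∀ l, 0 ≤ η * s t k * W l k := fun l =>
    mul_nonneg (mul_nonneg hη (hs t ht.1 k)) (hW l k)
  have hsum : η * s t k * ∑ l, x t l * W l k = -∑ l, η * s t k * W l k * -x t l := by
    rw [Finset.mul_sum, ← Finset.sum_neg_distrib]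
    exact Finset.sum_congr rfl fun l _ => by ring
  calc -(-(η + γ) * x t k + η * s t k * ∑ l, x t l * W l k)
        ≤ ∑ l, η * s t k * W l k * -x t l := by
        rw [hsum]
        linarith [mul_nonpos_of_nonneg_of_nonpos (add_nonneg hη hγ) hk]
    _ ≤ ∑ l, M * (x t l)⁻ := Finset.sum_le_sum fun l _ =>
        (mul_le_mul_of_nonneg_left (neg_le_negPart _) (hcoef l)).trans <|
          mul_le_mul_of_nonneg_right ((le_abs_self _).trans (hM t (Ico_subset_Icc_self ht) (l, k)))
            (negPart_nonneg _)
    _ = M * ∑ l, (x t l)⁻ := (Finset.mul_sum ..).symm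

theorem i_nonneg (h : sirODE W η γ s i x) (hW : ∀ k l, 0 ≤ W k l) (hη : 0 ≤ η) (hγ : 0 ≤ γ)
    (hs : ∀ t ∈ Ici 0, ∀ k, 0 ≤ s t k) (hx : ∀ t ∈ Ici 0, ∀ k, 0 ≤ x t k)
    (hi0 : ∀ k, 0 ≤ i 0 k) : ∀ t ∈ Ici 0, ∀ k, 0 ≤ i t k := fun T hT =>
  nonneg_of_neg_deriv_le_mul_sum_negPart (fun k t ht => (h k t ht).2.1) le_rfl
    (fun t ht k hk => by
      linarith [mul_nonpos_of_nonneg_of_nonpos hγ hk,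
        incidence_nonneg hW hη (hs t ht.1 k) (hx t ht.1)])
    hi0 T ⟨hT, le_rfl⟩

theorem exists_tendsto_s (h : sirODE W η γ s i x) (hW : ∀ k l, 0 ≤ W k l) (hη : 0 ≤ η)
    (hs : ∀ t ∈ Ici 0, ∀ k, 0 ≤ s t k) (hx : ∀ t ∈ Ici 0, ∀ k, 0 ≤ x t k) (k : Fin K) :
    ∃ S, Tendsto (fun t => s t k) atTop (𝓝 S) :=
  (antitoneOn_Ici_of_hasDerivWithinAt_nonpos (fun t ht => (h k t ht).1) fun t ht => by
    linarith [incidence_nonneg hW hη (hs t ht k) (hx t ht)]).exists_tendsto_atTop_of_bddBelow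
    ⟨0, forall_mem_image.2 fun t ht => hs t ht k⟩

end sirODE

/-- For solutions of the SIR-SBM system with initial data in `U₀`,
`x_k(t) → 0` and `i_k(t) → 0` as `t → ∞`, for every `k`. -/
theorem stmt6 {K : ℕ} (W : Matrix (Fin K) (Fin K) ℝ) (hW : ∀ k l, 0 ≤ W k l)
    (η γ : ℝ) (hη : 0 < η) (hγ : 0 < γ)
    (s i x : ℝ → Fin K → ℝ) (hODE : sirODE W η γ s i x)
    (h0 : inU0 (s 0) (i 0) (x 0)) :
    ∀ k : Fin K, Tendsto (fun t => x t k) atTop (nhds 0) ∧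
      Tendsto (fun t => i t k) atTop (nhds 0) := by
  obtain ⟨hs0, hi0, hx0, -, -⟩ := h0
  have hs := hODE.s_nonneg hη.le hs0
  have hx := hODE.x_nonneg hW hη.le hγ.le hs hx0
  have hi := hODE.i_nonneg hW hη.le hγ.le hs hx hi0
  intro k
  obtain ⟨S, hS⟩ := hODE.exists_tendsto_s hW hη.le hs hx k
  exact ⟨tendsto_zero_of_hasDerivWithinAt_add (add_pos hη hγ)
      (fun t ht => hODE.hasDerivWithinAt_x_add_s k ht) (hx · · k) (hs · · k) hS,
    tendsto_zero_of_hasDerivWithinAt_add hγ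
      (fun t ht => hODE.hasDerivWithinAt_i_add_s k ht) (hi · · k) (hs · · k) hS⟩
end

section
/- Let (Z_m)_{m≥0} be an irreducible multi-type branching process on N_0^K in which all nonzero states are transient, with offspring generating function G : [0,1]^K → [0,1]^K. If s ∈ [0,1]^K satisfies G(s) = s and s ≠ (1,...,1), then s equals the vector of extinction probabilities q, and q_k < 1 for every k. -/
/-!
Every iterate `G^{(m)}` fixes `s`. Irreducibility spreads a coordinate `s_j < 1` to all
types: from type `k` some generation contains a type-`j` individual with positive
probability, so `s_k = G_k^{(m)}(s) < 1`. Once `s ∈ [0,1)^K`, the mass of `Z_m` on each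
nonzero state vanishes (transience) and `∏ j, s_j ^ z_j` is a summable majorant, so by
dominated convergence `s_k = G_k^{(m)}(s) → lim P(Z_m = 0) = q_k`.
-/

open Filter

/-- The generating function of a distribution `ν` on `ℕ^K`, evaluated at `s`. -/
noncomputable def genFun {K : ℕ} (ν : (Fin K → ℕ) → ℝ) (s : Fin K → ℝ) : ℝ :=
  ∑' z : Fin K → ℕ, ν z * ∏ j, s j ^ z j

open Finset

section ProdPow

variable {ι : Type*} [Fintype ι] {s : ι → ℝ}

lemma prod_pow_le_one (hs0 : ∀ i, 0 ≤ s i) (hs1 : ∀ i, s i ≤ 1) (z : ι → ℕ) :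
    ∏ i, s i ^ z i ≤ 1 :=
  prod_le_one (fun i _ => pow_nonneg (hs0 i) _) fun i _ => pow_le_one₀ (hs0 i) (hs1 i)

lemma prod_pow_lt_one (hs0 : ∀ i, 0 ≤ s i) (hs1 : ∀ i, s i ≤ 1) {z : ι → ℕ} {j : ι}
    (hj : s j < 1) (hz : 0 < z j) : ∏ i, s i ^ z i < 1 := by
  classical
  rw [← mul_prod_erase _ _ (mem_univ j)]
  exact mul_lt_one_of_nonneg_of_lt_one_left (pow_nonneg (hs0 j) _)
    (pow_lt_one₀ (hs0 j) hj hz.ne')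
    (prod_le_one (fun i _ => pow_nonneg (hs0 i) _) fun i _ => pow_le_one₀ (hs0 i) (hs1 i))

-- Sums over boxes factor into products of partial geometric sums.
lemma summable_prod_pow (hs0 : ∀ i, 0 ≤ s i) (hs1 : ∀ i, s i < 1) :
    Summable fun z : ι → ℕ => ∏ i, s i ^ z i := by
  classical
  refine summable_of_sum_le (c := ∏ i, ∑' n : ℕ, s i ^ n)
    (fun z => prod_nonneg fun i _ => pow_nonneg (hs0 i) _) fun u => ?_
  have hbox : u ⊆ Fintype.piFinset fun i => u.image (· i) :=
    fun z hz => Fintype.mem_piFinset.2 fun i => mem_image_of_mem _ hz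
  calc ∑ z ∈ u, ∏ i, s i ^ z i
      ≤ ∑ z ∈ Fintype.piFinset fun i => u.image (· i), ∏ i, s i ^ z i :=
        sum_le_sum_of_subset_of_nonneg hbox fun z _ _ =>
          prod_nonneg fun i _ => pow_nonneg (hs0 i) _
    _ = ∏ i, ∑ n ∈ u.image (· i), s i ^ n := (prod_univ_sum _ _).symm
    _ ≤ ∏ i, ∑' n : ℕ, s i ^ n :=
        prod_le_prod (fun i _ => sum_nonneg fun n _ => pow_nonneg (hs0 i) _) fun i _ =>
          (summable_geometric_of_lt_one (hs0 i) (hs1 i)).sum_le_tsum _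
            fun n _ => pow_nonneg (hs0 i) _

end ProdPow

section GenFun

variable {K : ℕ} {s : Fin K → ℝ}

lemma genFun_single (k : Fin K) (s : Fin K → ℝ) :
    genFun (fun z => if z = Pi.single k 1 then 1 else 0) s = s k := by
  rw [genFun, tsum_eq_single (Pi.single k 1) fun z hz => by simp [hz]]
  simp [Pi.single_apply, pow_ite]

lemma genFun_lt_one {ν : (Fin K → ℕ) → ℝ} (hnn : ∀ z, 0 ≤ ν z) (hν : HasSum ν 1)
    (hs0 : ∀ j, 0 ≤ s j) (hs1 : ∀ j, s j ≤ 1) {z : Fin K → ℕ} (hz : 0 < ν z)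
    (hsz : ∏ j, s j ^ z j < 1) : genFun ν s < 1 := by
  have hle : ∀ w, ν w * ∏ j, s j ^ w j ≤ ν w := fun w =>
    mul_le_of_le_one_right (hnn w) (prod_pow_le_one hs0 hs1 w)
  rw [genFun, ← hν.tsum_eq]
  exact Summable.tsum_lt_tsum hle (mul_lt_of_lt_one_right hz hsz)
    (.of_nonneg_of_le (fun w => mul_nonneg (hnn w) (prod_nonneg fun j _ => pow_nonneg (hs0 j) _))
      hle hν.summable) hν.summable

lemma tendsto_genFun_of_tendsto_zero {ν : ℕ → (Fin K → ℕ) → ℝ} {a : ℝ}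
    (hbdd : ∀ m z, ‖ν m z‖ ≤ 1) (h0 : Tendsto (fun m => ν m 0) atTop (nhds a))
    (hesc : ∀ z ≠ 0, Tendsto (fun m => ν m z) atTop (nhds 0))
    (hs0 : ∀ j, 0 ≤ s j) (hs1 : ∀ j, s j < 1) :
    Tendsto (fun m => genFun (ν m) s) atTop (nhds a) := by
  classical
  have hlim : ∀ z, Tendsto (fun m => ν m z * ∏ j, s j ^ z j) atTop
      (nhds (if z = 0 then a else 0)) := by
    intro z
    by_cases hz : z = 0
    · subst hz; simpa using h0
    · simpa [hz] using (hesc z hz).mul_const (∏ j, s j ^ z j)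
  have hdom : ∀ m z, ‖ν m z * ∏ j, s j ^ z j‖ ≤ ∏ j, s j ^ z j := fun m z => by
    rw [norm_mul, Real.norm_of_nonneg (prod_nonneg fun j _ => pow_nonneg (hs0 j) _)]
    exact mul_le_of_le_one_left (prod_nonneg fun j _ => pow_nonneg (hs0 j) _) (hbdd m z)
  simpa [genFun] using tendsto_tsum_of_dominated_convergence (summable_prod_pow hs0 hs1) hlim
    (Eventually.of_forall hdom)

lemma genFun_iterate_eq_of_fixed {μ : Fin K → ℕ → (Fin K → ℕ) → ℝ}
    (hinit : ∀ k z, μ k 0 z = if z = Pi.single k 1 then 1 else 0)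
    (hiter : ∀ k m (s : Fin K → ℝ), (∀ j, 0 ≤ s j) → (∀ j, s j ≤ 1) →
      genFun (μ k (m + 1)) s = genFun (μ k 1) (fun j => genFun (μ j m) s))
    (hs0 : ∀ j, 0 ≤ s j) (hs1 : ∀ j, s j ≤ 1) (hfix : ∀ k, genFun (μ k 1) s = s k) :
    ∀ m k, genFun (μ k m) s = s k
  | 0, k => by simpa only [← hinit] using genFun_single k s
  | m + 1, k => by
    rw [hiter k m s hs0 hs1, funext (genFun_iterate_eq_of_fixed hinit hiter hs0 hs1 hfix m)]
    exact hfix k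

end GenFun

theorem stmt13_general {K : ℕ} (μ : Fin K → ℕ → (Fin K → ℕ) → ℝ)
    (hnn : ∀ k m z, 0 ≤ μ k m z)
    (hprob : ∀ k m, HasSum (μ k m) 1)
    (hinit : ∀ k z, μ k 0 z = if z = Pi.single k 1 then 1 else 0)
    (hiter : ∀ k m (s : Fin K → ℝ), (∀ j, 0 ≤ s j) → (∀ j, s j ≤ 1) →
      genFun (μ k (m + 1)) s = genFun (μ k 1) (fun j => genFun (μ j m) s))
    (hirr : ∀ i j : Fin K, ∃ m : ℕ, ∃ z : Fin K → ℕ, 0 < z j ∧ 0 < μ i m z)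
    (htrans : ∀ z : Fin K → ℕ, z ≠ 0 → ∀ k, Tendsto (fun m => μ k m z) atTop (nhds 0))
    (q : Fin K → ℝ) (hq : ∀ k, Tendsto (fun m => μ k m 0) atTop (nhds (q k)))
    (s : Fin K → ℝ) (hs0 : ∀ j, 0 ≤ s j) (hs1 : ∀ j, s j ≤ 1)
    (hfix : ∀ k, genFun (μ k 1) s = s k) (hne : s ≠ fun _ => 1) :
    s = q ∧ ∀ k, q k < 1 := by
  have hiterate := genFun_iterate_eq_of_fixed hinit hiter hs0 hs1 hfix
  have hlt : ∀ k, s k < 1 := by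
    obtain ⟨j, hj⟩ := Function.ne_iff.mp hne
    intro k
    obtain ⟨m, z, hzj, hμz⟩ := hirr k j
    rw [← hiterate m k]
    exact genFun_lt_one (hnn k m) (hprob k m) hs0 hs1 hμz
      (prod_pow_lt_one hs0 hs1 ((hs1 j).lt_of_ne hj) hzj)
  have hbdd : ∀ k m z, ‖μ k m z‖ ≤ 1 := fun k m z => by
    rw [Real.norm_of_nonneg (hnn k m z)]
    exact le_hasSum (hprob k m) z fun w _ => hnn k m w
  have hsq : s = q := funext fun k => by
    refine tendsto_nhds_unique ?_
      (tendsto_genFun_of_tendsto_zero (hbdd k) (hq k) (fun z hz => htrans z hz k) hs0 hlt)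
    simpa only [hiterate] using tendsto_const_nhds
  exact ⟨hsq, hsq ▸ hlt⟩

/-- Let `(Z_m)` be an irreducible multi-type branching process on `ℕ^K` (distributions
`μ k m` of `Z_m` given `Z_0 = e_k`, with the branching semigroup property
`G^{(m+1)} = G^{(m)} ∘ G`) in which all nonzero states are transient.  If
`s ∈ [0,1]^K` satisfies `G(s) = s` and `s ≠ (1,…,1)`, then `s` equals the vector of
extinction probabilities `q`, and `q_k < 1` for every `k`. -/
theorem stmt13 {K : ℕ} (μ : Fin K → ℕ → (Fin K → ℕ) → ℝ)
    (hnn : ∀ k m z, 0 ≤ μ k m z)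
    (hprob : ∀ k m, HasSum (μ k m) 1)
    (hinit : ∀ k z, μ k 0 z = if z = Pi.single k 1 then 1 else 0)
    (hiter : ∀ k m (s : Fin K → ℝ), (∀ j, 0 ≤ s j) → (∀ j, s j ≤ 1) →
      genFun (μ k (m + 1)) s = genFun (μ k 1) (fun j => genFun (μ j m) s))
    (hirr : ∀ i j : Fin K, ∃ m : ℕ, ∃ z : Fin K → ℕ, 0 < z j ∧ 0 < μ i m z)
    (htrans : ∀ z : Fin K → ℕ, z ≠ 0 → ∀ k, Tendsto (fun m => μ k m z) atTop (nhds 0))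
    (habs : ∀ k m, μ k m 0 ≤ μ k (m + 1) 0)
    (q : Fin K → ℝ) (hq : ∀ k, Tendsto (fun m => μ k m 0) atTop (nhds (q k)))
    (s : Fin K → ℝ) (hs0 : ∀ j, 0 ≤ s j) (hs1 : ∀ j, s j ≤ 1)
    (hfix : ∀ k, genFun (μ k 1) s = s k) (hne : s ≠ fun _ => 1) :
    s = q ∧ ∀ k, q k < 1 :=
  stmt13_general μ hnn hprob hinit hiter hirr htrans q hq s hs0 hs1 hfix hne
end

section
/- Let g : [0,∞) → R be differentiable with g(0) = 1 and suppose g'(t) ≥ c·g(t)·(γ - g(t)) for all t in [0, T], where 0 < γ < 1 and c > 0, and g(t) > 0 on [0,T]. Then g cannot reach the value γ in finite time: g(t) > γ for all t ∈ [0, T]. -/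
/-- Differential-inequality lemma: if `g(0) = 1`, `g > 0` on `[0,T]`, `0 < γ < 1`,
`c > 0` and `g' ≥ c g (γ - g)` on `[0,T]`, then `g` cannot reach the value `γ` in finite
time: `g(t) > γ` for all `t ∈ [0,T]`. -/
theorem stmt16 (γ c T : ℝ) (hγ0 : 0 < γ) (hγ1 : γ < 1) (hc : 0 < c) (hT : 0 ≤ T)
    (g g' : ℝ → ℝ) (hg0 : g 0 = 1)
    (hderiv : ∀ t ∈ Set.Icc (0 : ℝ) T, HasDerivWithinAt g (g' t) (Set.Icc 0 T) t)
    (hineq : ∀ t ∈ Set.Icc (0 : ℝ) T, c * g t * (γ - g t) ≤ g' t)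
    (hpos : ∀ t ∈ Set.Icc (0 : ℝ) T, 0 < g t) :
    ∀ t ∈ Set.Icc (0 : ℝ) T, γ < g t := by
  intro t ht
  by_contra hcon
  push_neg at hcon
  have hgcont : ContinuousOn g (Set.Icc 0 T) := fun s hs => (hderiv s hs).continuousWithinAt
  -- a bound M for g on [0,T]
  obtain ⟨x, hxmem, hxmax⟩ := isCompact_Icc.exists_isMaxOn ⟨0, Set.left_mem_Icc.2 hT⟩ hgcont
  set M := g x with hMdef
  have hM : ∀ s ∈ Set.Icc (0:ℝ) T, g s ≤ M := fun s hs => hxmax hs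
  -- the set of times where g ≤ γ
  set S := {s | s ∈ Set.Icc (0:ℝ) T ∧ g s ≤ γ} with hSdef
  have hSne : S.Nonempty := ⟨t, ht, hcon⟩
  have hSbdd : BddBelow S := ⟨0, fun s hs => hs.1.1⟩
  have hSclosed : IsClosed S := by
    have : S = Set.Icc (0:ℝ) T ∩ g ⁻¹' Set.Iic γ := by
      ext s; simp [hSdef, Set.mem_Icc, and_assoc]
    rw [this]
    exact hgcont.preimage_isClosed_of_isClosed isClosed_Icc isClosed_Iic
  set t₀ := sInf S with ht₀def
  have ht₀S : t₀ ∈ S := hSclosed.csInf_mem hSne hSbdd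
  have ht₀Icc : t₀ ∈ Set.Icc (0:ℝ) T := ht₀S.1
  have ht₀pos : 0 < t₀ := by
    rcases lt_or_eq_of_le ht₀Icc.1 with h | h
    · exact h
    · exfalso
      have := ht₀S.2
      rw [← h, hg0] at this
      linarith
  -- on (0, t₀), γ < g s
  have hgt : ∀ s ∈ Set.Ioo (0:ℝ) t₀, γ < g s := by
    intro s hs
    by_contra h
    push_neg at h
    have hsS : s ∈ S := ⟨⟨le_of_lt hs.1, le_trans (le_of_lt hs.2) ht₀Icc.2⟩, h⟩
    exact absurd (csInf_le hSbdd hsS) (not_le.2 hs.2)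
  -- integrating factor
  set u : ℝ → ℝ := fun s => (g s - γ) * Real.exp (c * M * s) with hudef
  have hIoo_sub : Set.Ioo (0:ℝ) t₀ ⊆ Set.Icc (0:ℝ) T := fun s hs =>
    ⟨le_of_lt hs.1, le_trans (le_of_lt hs.2) ht₀Icc.2⟩
  have hderivAt : ∀ s ∈ Set.Ioo (0:ℝ) t₀,
      HasDerivAt u ((g' s + (g s - γ) * (c * M)) * Real.exp (c * M * s)) s := by
    intro s hs
    have hsIcc : s ∈ Set.Icc (0:ℝ) T := hIoo_sub hs
    have hmem : Set.Icc (0:ℝ) T ∈ nhds s :=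
      Icc_mem_nhds hs.1 (lt_of_lt_of_le hs.2 ht₀Icc.2)
    have hg : HasDerivAt g (g' s) s := (hderiv s hsIcc).hasDerivAt hmem
    have hgs : HasDerivAt (fun s => g s - γ) (g' s) s := hg.sub_const γ
    have hexp : HasDerivAt (fun s => Real.exp (c * M * s)) (c * M * Real.exp (c * M * s)) s := by
      have h1 : HasDerivAt (fun s : ℝ => c * M * s) (c * M) s := by
        simpa using (hasDerivAt_id s).const_mul (c * M)
      simpa [mul_comm] using h1.exp
    have := hgs.mul hexp
    exact this.congr_deriv (by ring)
  have humono : MonotoneOn u (Set.Icc 0 t₀) := by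
    apply monotoneOn_of_deriv_nonneg (convex_Icc 0 t₀)
    · apply ContinuousOn.mul
      · exact ((hgcont.mono (Set.Icc_subset_Icc le_rfl ht₀Icc.2)).sub continuousOn_const)
      · exact (Real.continuous_exp.comp (continuous_const.mul continuous_id)).continuousOn
    · intro s hs
      rw [interior_Icc] at hs
      exact (hderivAt s hs).differentiableAt.differentiableWithinAt
    · intro s hs
      rw [interior_Icc] at hs
      rw [(hderivAt s hs).deriv]
      have hsIcc : s ∈ Set.Icc (0:ℝ) T := hIoo_sub hs
      have h1 : c * g s * (γ - g s) ≤ g' s := hineq s hsIcc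
      have h2 : γ < g s := hgt s hs
      have h3 : g s ≤ M := hM s hsIcc
      have hexp_pos : 0 < Real.exp (c * M * s) := Real.exp_pos _
      have key : 0 ≤ g' s + (g s - γ) * (c * M) := by nlinarith [mul_nonneg (mul_nonneg hc.le (sub_nonneg.2 h3)) (sub_nonneg.2 h2.le)]
      positivity
  have h0mem : (0:ℝ) ∈ Set.Icc (0:ℝ) t₀ := Set.left_mem_Icc.2 (le_of_lt ht₀pos)
  have ht₀mem : t₀ ∈ Set.Icc (0:ℝ) t₀ := Set.right_mem_Icc.2 (le_of_lt ht₀pos)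
  have := humono h0mem ht₀mem (le_of_lt ht₀pos)
  have hu0 : u 0 = 1 - γ := by simp [hudef, hg0]
  have hut₀ : u t₀ ≤ 0 := by
    have hgle : g t₀ - γ ≤ 0 := by linarith [ht₀S.2]
    exact mul_nonpos_of_nonpos_of_nonneg hgle (le_of_lt (Real.exp_pos _))
  rw [hu0] at this
  linarith
end
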